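/- Consider the three-cell partitions of M = {1,2,3}: if Δ(S) = (1/2)(H(X_1)+H(X_2)+H(X_3)−H(X_{{1,2,3}})) satisfies both Δ(S) ≥ I(X_{{1,2}};X_3) and Δ(S) ≥ I(X_{{1,3}};X_2), then Δ(S) = I(X_{{1,2}};X_3) = I(X_{{1,3}};X_2) = I(X_1;X_2), and I(X_{{2,3}};X_1) ≥ I(X_1;X_2). In particular, the minimum of {I(X_{{1,2}};X_3), I(X_{{1,3}};X_2), I(X_{{2,3}};X_1), Δ(S)} equals I(X_1;X_2). -/

import Mathlib

open Finset

/-- The probability that the random variable `X` takes the value `a`. -/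
noncomputable def prb {Ω α : Type*} [Fintype Ω] [DecidableEq α]
    (p : Ω → ℝ) (X : Ω → α) (a : α) : ℝ :=
  ∑ ω ∈ Finset.univ.filter (fun ω => X ω = a), p ω

/-- Shannon entropy of a random variable `X` on a finite probability space. -/
noncomputable def ent {Ω α : Type*} [Fintype Ω] [Fintype α] [DecidableEq α]
    (p : Ω → ℝ) (X : Ω → α) : ℝ :=
  ∑ a : α, Real.negMulLog (prb p X a)

/-- Mutual information `I(X;Y) = H(X) + H(Y) - H(X,Y)`. -/
noncomputable def mi {Ω α β : Type*} [Fintype Ω] [Fintype α] [DecidableEq α]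
    [Fintype β] [DecidableEq β] (p : Ω → ℝ) (X : Ω → α) (Y : Ω → β) : ℝ :=
  ent p X + ent p Y - ent p (fun ω => (X ω, Y ω))

/-- Conditional mutual information `I(X;Y|W) = H(X,W) + H(Y,W) - H(X,Y,W) - H(W)`. -/
noncomputable def cmi {Ω α β γ : Type*} [Fintype Ω] [Fintype α] [DecidableEq α]
    [Fintype β] [DecidableEq β] [Fintype γ] [DecidableEq γ]
    (p : Ω → ℝ) (X : Ω → α) (Y : Ω → β) (W : Ω → γ) : ℝ :=
  ent p (fun ω => (X ω, W ω)) + ent p (fun ω => (Y ω, W ω))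
    - ent p (fun ω => (X ω, Y ω, W ω)) - ent p W

/-- Conditional entropy `H(X|Y) = H(X,Y) - H(Y)`. -/
noncomputable def condEnt {Ω α β : Type*} [Fintype Ω] [Fintype α] [DecidableEq α]
    [Fintype β] [DecidableEq β] (p : Ω → ℝ) (X : Ω → α) (Y : Ω → β) : ℝ :=
  ent p (fun ω => (X ω, Y ω)) - ent p Y

/-!
Since `2Δ(S) = I(X₁;X₂) + I(X₁₂;X₃) = I(X₁;X₃) + I(X₁₃;X₂)`, the hypotheses say
`I(X₁₂;X₃) ≤ I(X₁;X₂)` and `I(X₁₃;X₂) ≤ I(X₁;X₃)`. The chain rule `I(X Y;Z) = I(X;Z) + I(Y;Z|X)`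
and the nonnegativity of conditional mutual information close the cycle
`I(X₁;X₃) ≤ I(X₁₂;X₃) ≤ I(X₁;X₂) ≤ I(X₁₃;X₂) ≤ I(X₁;X₃)`, so all of these are equal, and
`I(X₂₃;X₁) = I(X₁;X₂) + I(X₁;X₃|X₂) ≥ I(X₁;X₂)`.

`I(X;Y|W) ≥ 0` is proved fibrewise over `W`: for a nonnegative array `q` with row sums `a`,
column sums `b` and total `s`, the inequality `log t ≥ 1 - 1/t` gives
`q log (q s / (a b)) ≥ q - a b / s`, and the right-hand side sums to zero.
-/

open Real

lemma sub_mul_div_le_mul_log {q a b s : ℝ} (hq : 0 ≤ q) (hqa : q ≤ a) (hqb : q ≤ b)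
    (has : a ≤ s) : q - a * b / s ≤ q * (log q + log s - log a - log b) := by
  rcases hq.eq_or_lt with rfl | hq
  · have : 0 ≤ a * b / s := div_nonneg (mul_nonneg hqa hqb) (hqa.trans has)
    simpa using this
  have ha : 0 < a := hq.trans_le hqa
  have hb : 0 < b := hq.trans_le hqb
  have hs : 0 < s := ha.trans_le has
  calc q - a * b / s = q * (1 - (q * s / (a * b))⁻¹) := by field_simp
    _ ≤ q * log (q * s / (a * b)) :=
      mul_le_mul_of_nonneg_left (one_sub_inv_le_log_of_pos (by positivity)) hq.le
    _ = q * (log q + log s - log a - log b) := by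
      rw [log_div (by positivity) (by positivity), log_mul hq.ne' hs.ne', log_mul ha.ne' hb.ne']
      ring

lemma sum_negMulLog_add_negMulLog_sum_le {α β : Type*} [Fintype α] [Fintype β]
    (q : α → β → ℝ) (hq : ∀ x y, 0 ≤ q x y) :
    ∑ x, ∑ y, negMulLog (q x y) + negMulLog (∑ x, ∑ y, q x y)
      ≤ ∑ x, negMulLog (∑ y, q x y) + ∑ y, negMulLog (∑ x, q x y) := by
  set a : α → ℝ := fun x => ∑ y, q x y with ha
  set b : β → ℝ := fun y => ∑ x, q x y with hb
  set s : ℝ := ∑ x, a x with hs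
  have ha0 : ∀ x, 0 ≤ a x := fun x => sum_nonneg fun y _ => hq x y
  have hsb : ∑ y, b y = s := sum_comm
  have hgap : ∑ x, negMulLog (a x) + ∑ y, negMulLog (b y)
      - (∑ x, ∑ y, negMulLog (q x y) + negMulLog s)
      = ∑ x, ∑ y, q x y * (log (q x y) + log s - log (a x) - log (b y)) := by
    simp only [negMulLog, neg_mul, ha, hb, hs, sum_mul, mul_add, mul_sub,
      sum_add_distrib, sum_sub_distrib, sum_neg_distrib]
    rw [sum_comm (f := fun y x => q x y * log (∑ x', q x' y))]
    ring
  have hlow : ∑ x, ∑ y, (q x y - a x * b y / s)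
      ≤ ∑ x, ∑ y, q x y * (log (q x y) + log s - log (a x) - log (b y)) :=
    sum_le_sum fun x _ => sum_le_sum fun y _ => sub_mul_div_le_mul_log (hq x y)
      (single_le_sum (fun y' _ => hq x y') (mem_univ y))
      (single_le_sum (fun x' _ => hq x' y) (mem_univ x))
      (single_le_sum (fun x' _ => ha0 x') (mem_univ x))
  have hzero : ∑ x, ∑ y, (q x y - a x * b y / s) = 0 := by
    simp only [sum_sub_distrib, ← sum_div, ← mul_sum, ← sum_mul, hsb]
    rw [mul_self_div_self]
    exact sub_self _
  linarith

lemma prb_nonneg {Ω α : Type*} [Fintype Ω] [DecidableEq α] {p : Ω → ℝ} (hp : ∀ ω, 0 ≤ p ω)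
    (X : Ω → α) (a : α) : 0 ≤ prb p X a :=
  sum_nonneg fun ω _ => hp ω

lemma prb_comp_equiv {Ω α β : Type*} [Fintype Ω] [DecidableEq α] [DecidableEq β]
    (p : Ω → ℝ) (e : α ≃ β) (X : Ω → α) (a : α) :
    prb p (fun ω => e (X ω)) (e a) = prb p X a := by
  simp only [prb, e.apply_eq_iff_eq]

lemma sum_prb_prod_left {Ω α β : Type*} [Fintype Ω] [Fintype α] [DecidableEq α]
    [DecidableEq β] (p : Ω → ℝ) (X : Ω → α) (Y : Ω → β) (b : β) :
    ∑ a, prb p (fun ω => (X ω, Y ω)) (a, b) = prb p Y b := by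
  simp only [prb, sum_filter, Prod.mk.injEq, ite_and]
  rw [sum_comm]
  simp

lemma sum_prb_prod_mid {Ω α β γ : Type*} [Fintype Ω] [DecidableEq α] [Fintype β]
    [DecidableEq β] [DecidableEq γ] (p : Ω → ℝ) (X : Ω → α) (Y : Ω → β) (Z : Ω → γ)
    (a : α) (c : γ) :
    ∑ b, prb p (fun ω => (X ω, Y ω, Z ω)) (a, b, c) = prb p (fun ω => (X ω, Z ω)) (a, c) := by
  let e : β × α × γ ≃ α × β × γ :=
    ⟨fun t => (t.2.1, t.1, t.2.2), fun t => (t.2.1, t.1, t.2.2), fun _ => rfl, fun _ => rfl⟩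
  rw [← sum_prb_prod_left p Y (fun ω => (X ω, Z ω)) (a, c)]
  exact sum_congr rfl fun b _ => prb_comp_equiv p e (fun ω => (Y ω, X ω, Z ω)) (b, a, c)

lemma ent_comp_equiv {Ω α β : Type*} [Fintype Ω] [Fintype α] [DecidableEq α] [Fintype β]
    [DecidableEq β] (p : Ω → ℝ) (e : α ≃ β) (X : Ω → α) :
    ent p (fun ω => e (X ω)) = ent p X := by
  rw [ent, ← e.sum_comp]
  simp only [prb_comp_equiv, ent]

lemma ent_prod_eq_sum_sum {Ω α β : Type*} [Fintype Ω] [Fintype α] [DecidableEq α] [Fintype β]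
    [DecidableEq β] (p : Ω → ℝ) (X : Ω → α) (Y : Ω → β) :
    ent p (fun ω => (X ω, Y ω)) = ∑ b, ∑ a, negMulLog (prb p (fun ω => (X ω, Y ω)) (a, b)) := by
  rw [ent, Fintype.sum_prod_type, sum_comm]

theorem cmi_nonneg {Ω α β γ : Type*} [Fintype Ω] [Fintype α] [DecidableEq α]
    [Fintype β] [DecidableEq β] [Fintype γ] [DecidableEq γ] {p : Ω → ℝ}
    (hp : ∀ ω, 0 ≤ p ω) (X : Ω → α) (Y : Ω → β) (W : Ω → γ) : 0 ≤ cmi p X Y W := by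
  set q : γ → α → β → ℝ := fun w x y => prb p (fun ω => (X ω, Y ω, W ω)) (x, y, w)
  have hXYW : ent p (fun ω => (X ω, Y ω, W ω)) = ∑ w, ∑ x, ∑ y, negMulLog (q w x y) := by
    simp only [ent, Fintype.sum_prod_type]
    exact (sum_congr rfl fun x _ => sum_comm).trans sum_comm
  have hcmi : cmi p X Y W = ∑ w, ((∑ x, negMulLog (∑ y, q w x y) + ∑ y, negMulLog (∑ x, q w x y))
      - (∑ x, ∑ y, negMulLog (q w x y) + negMulLog (∑ x, ∑ y, q w x y))) := by
    rw [cmi, ent_prod_eq_sum_sum, ent_prod_eq_sum_sum, hXYW, ent]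
    simp only [q, sum_prb_prod_mid, sum_prb_prod_left, sum_sub_distrib, sum_add_distrib]
    ring
  rw [hcmi]
  exact sum_nonneg fun w _ => sub_nonneg.2 <|
    sum_negMulLog_add_negMulLog_sum_le (q w) fun x y => prb_nonneg hp _ _

section

variable {Ω α β γ : Type*} [Fintype Ω] [Fintype α] [DecidableEq α]
  [Fintype β] [DecidableEq β] [Fintype γ] [DecidableEq γ] (p : Ω → ℝ)

lemma ent_prod_comm (X : Ω → α) (Y : Ω → β) :
    ent p (fun ω => (Y ω, X ω)) = ent p (fun ω => (X ω, Y ω)) :=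
  ent_comp_equiv p (Equiv.prodComm α β) (fun ω => (X ω, Y ω))

lemma ent_prod_assoc (X : Ω → α) (Y : Ω → β) (Z : Ω → γ) :
    ent p (fun ω => ((X ω, Y ω), Z ω)) = ent p (fun ω => (X ω, Y ω, Z ω)) :=
  ent_comp_equiv p (Equiv.prodAssoc α β γ).symm (fun ω => (X ω, Y ω, Z ω))

lemma ent_prod_rotate (X : Ω → α) (Y : Ω → β) (Z : Ω → γ) :
    ent p (fun ω => (Y ω, Z ω, X ω)) = ent p (fun ω => (X ω, Y ω, Z ω)) :=
  ent_comp_equiv p ((Equiv.prodComm α (β × γ)).trans (Equiv.prodAssoc β γ α))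
    (fun ω => (X ω, Y ω, Z ω))

lemma ent_prod_swap_right (X : Ω → α) (Y : Ω → β) (Z : Ω → γ) :
    ent p (fun ω => (X ω, Z ω, Y ω)) = ent p (fun ω => (X ω, Y ω, Z ω)) :=
  ent_comp_equiv p ((Equiv.refl α).prodCongr (Equiv.prodComm β γ))
    (fun ω => (X ω, Y ω, Z ω))

lemma mi_comm (X : Ω → α) (Y : Ω → β) : mi p X Y = mi p Y X := by
  rw [mi, mi, ent_prod_comm]
  ring

lemma sum_ent_sub_ent_eq_mi_add_mi (X : Ω → α) (Y : Ω → β) (Z : Ω → γ) :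
    ent p X + ent p Y + ent p Z - ent p (fun ω => (X ω, Y ω, Z ω))
      = mi p X Y + mi p (fun ω => (X ω, Y ω)) Z := by
  rw [mi, mi, ent_prod_assoc]
  ring

lemma mi_prod_eq_mi_add_cmi (X : Ω → α) (Y : Ω → β) (Z : Ω → γ) :
    mi p (fun ω => (X ω, Y ω)) Z = mi p X Z + cmi p Y Z X := by
  rw [mi, mi, cmi, ent_prod_assoc, ent_prod_comm p X Y, ent_prod_comm p X Z,
    ent_prod_rotate p X Y Z]
  ring

end

theorem case1_min_eq_general {Ω α β γ : Type*} [Fintype Ω] [Fintype α] [DecidableEq α]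
    [Fintype β] [DecidableEq β] [Fintype γ] [DecidableEq γ]
    (p : Ω → ℝ) (hp0 : ∀ ω, 0 ≤ p ω)
    (X1 : Ω → α) (X2 : Ω → β) (X3 : Ω → γ)
    (h1 : mi p (fun ω => (X1 ω, X2 ω)) X3
      ≤ (1/2) * (ent p X1 + ent p X2 + ent p X3 - ent p (fun ω => (X1 ω, X2 ω, X3 ω))))
    (h2 : mi p (fun ω => (X1 ω, X3 ω)) X2
      ≤ (1/2) * (ent p X1 + ent p X2 + ent p X3 - ent p (fun ω => (X1 ω, X2 ω, X3 ω)))) :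
    (1/2) * (ent p X1 + ent p X2 + ent p X3 - ent p (fun ω => (X1 ω, X2 ω, X3 ω)))
        = mi p (fun ω => (X1 ω, X2 ω)) X3
    ∧ mi p (fun ω => (X1 ω, X2 ω)) X3 = mi p (fun ω => (X1 ω, X3 ω)) X2
    ∧ mi p (fun ω => (X1 ω, X3 ω)) X2 = mi p X1 X2
    ∧ mi p X1 X2 ≤ mi p (fun ω => (X2 ω, X3 ω)) X1
    ∧ min (min (mi p (fun ω => (X1 ω, X2 ω)) X3) (mi p (fun ω => (X1 ω, X3 ω)) X2))
        (min (mi p (fun ω => (X2 ω, X3 ω)) X1)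
          ((1/2) * (ent p X1 + ent p X2 + ent p X3
            - ent p (fun ω => (X1 ω, X2 ω, X3 ω)))))
      = mi p X1 X2 := by
  have hΔ₁₂ := sum_ent_sub_ent_eq_mi_add_mi p X1 X2 X3
  have hΔ₁₃ := sum_ent_sub_ent_eq_mi_add_mi p X1 X3 X2
  rw [ent_prod_swap_right] at hΔ₁₃
  have hc₁₂ := mi_prod_eq_mi_add_cmi p X1 X2 X3
  have hc₁₃ := mi_prod_eq_mi_add_cmi p X1 X3 X2
  have hc₂₃ := mi_prod_eq_mi_add_cmi p X2 X3 X1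
  rw [mi_comm p X2 X1] at hc₂₃
  have hcmi₂₃ := cmi_nonneg hp0 X2 X3 X1
  have hcmi₃₂ := cmi_nonneg hp0 X3 X2 X1
  have hcmi₃₁ := cmi_nonneg hp0 X3 X1 X2
  have hΔ : (1/2) * (ent p X1 + ent p X2 + ent p X3 - ent p (fun ω => (X1 ω, X2 ω, X3 ω)))
      = mi p (fun ω => (X1 ω, X2 ω)) X3 := by linarith
  have h₁₂ : mi p (fun ω => (X1 ω, X2 ω)) X3 = mi p (fun ω => (X1 ω, X3 ω)) X2 := by linarith
  have h₁₃ : mi p (fun ω => (X1 ω, X3 ω)) X2 = mi p X1 X2 := by linarith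
  have h₂₃ : mi p X1 X2 ≤ mi p (fun ω => (X2 ω, X3 ω)) X1 := by linarith
  refine ⟨hΔ, h₁₂, h₁₃, h₂₃, ?_⟩
  rw [hΔ, h₁₂, h₁₃, min_self, min_eq_right h₂₃, min_self]

/-- If `Δ(S) ≥ I(X_{1,2};X_3)` and `Δ(S) ≥ I(X_{1,3};X_2)`, then
`Δ(S) = I(X_{1,2};X_3) = I(X_{1,3};X_2) = I(X_1;X_2)`,
`I(X_{2,3};X_1) ≥ I(X_1;X_2)`, and the minimum of the four quantities
`I(X_{1,2};X_3), I(X_{1,3};X_2), I(X_{2,3};X_1), Δ(S)` equals `I(X_1;X_2)`. -/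
theorem case1_min_eq {Ω α β γ : Type*} [Fintype Ω] [Fintype α] [DecidableEq α]
    [Fintype β] [DecidableEq β] [Fintype γ] [DecidableEq γ]
    (p : Ω → ℝ) (hp0 : ∀ ω, 0 ≤ p ω) (hp1 : ∑ ω : Ω, p ω = 1)
    (X1 : Ω → α) (X2 : Ω → β) (X3 : Ω → γ)
    (h1 : mi p (fun ω => (X1 ω, X2 ω)) X3
      ≤ (1/2) * (ent p X1 + ent p X2 + ent p X3 - ent p (fun ω => (X1 ω, X2 ω, X3 ω))))
    (h2 : mi p (fun ω => (X1 ω, X3 ω)) X2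
      ≤ (1/2) * (ent p X1 + ent p X2 + ent p X3 - ent p (fun ω => (X1 ω, X2 ω, X3 ω)))) :
    (1/2) * (ent p X1 + ent p X2 + ent p X3 - ent p (fun ω => (X1 ω, X2 ω, X3 ω)))
        = mi p (fun ω => (X1 ω, X2 ω)) X3
    ∧ mi p (fun ω => (X1 ω, X2 ω)) X3 = mi p (fun ω => (X1 ω, X3 ω)) X2
    ∧ mi p (fun ω => (X1 ω, X3 ω)) X2 = mi p X1 X2
    ∧ mi p X1 X2 ≤ mi p (fun ω => (X2 ω, X3 ω)) X1
    ∧ min (min (mi p (fun ω => (X1 ω, X2 ω)) X3) (mi p (fun ω => (X1 ω, X3 ω)) X2))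
        (min (mi p (fun ω => (X2 ω, X3 ω)) X1)
          ((1/2) * (ent p X1 + ent p X2 + ent p X3
            - ent p (fun ω => (X1 ω, X2 ω, X3 ω)))))
      = mi p X1 X2 :=
  case1_min_eq_general p hp0 X1 X2 X3 h1 h2
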